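/- Let μ be an atomless probability measure on ℝ with finite second moment, let γ : [0,1] → W₂(ℝ) be a curve, and set v₀ = log_μ(γ(0)), v₁ = log_μ(γ(1)). Then γ is a constant-speed geodesic, i.e. d_W(γ(s), γ(t)) = |s − t|·d_W(γ(0), γ(1)) for all s, t ∈ [0,1], if and only if γ(t) = exp_μ((1−t)v₀ + t v₁) for all t ∈ [0,1]. -/

import Mathlib

/-!
Since `F_μ` pushes the atomless `μ` forward to the uniform law `𝕌` on `(0,1)`,
`exp_μ((1-t) v₀ + t v₁)` is the law under `𝕌` of `(1-t) F₀⁻ + t F₁⁻`. The monotone coupling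
`(F₁⁻, F₂⁻)_# 𝕌` is optimal for the quadratic cost: the cost of any coupling `π` is
`∫ π(straddle q) dq`, and the monotone coupling makes `π(straddle q)` as small as the marginals
allow, for every `q`. Hence `ν ↦ F_ν⁻` is an isometry of `W₂(ℝ)` into `L²(𝕌)`, mapping
`exp_μ((1-t) v₀ + t v₁)` to the point `(1-t) F₀⁻ + t F₁⁻` of the segment. Conversely, in the
strictly convex space `L²(𝕌)` a point at distances `t d` and `(1-t) d` from the ends of a segment
of length `d` is the point `(1-t) x + t z` of that segment, and `ν` is recovered from `F_ν⁻`.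
-/

open MeasureTheory

noncomputable section

/-- `ν` has a finite second moment. -/
def FinSecondMoment (ν : Measure ℝ) : Prop :=
  ∫⁻ x, ENNReal.ofReal (x ^ 2) ∂ν < ⊤

/-- `ν ∈ W₂(ℝ)`: a Borel probability measure on `ℝ` with finite second moment. -/
def MemW2 (ν : Measure ℝ) : Prop :=
  IsProbabilityMeasure ν ∧ FinSecondMoment ν

/-- `π` is a coupling of `ν₁` and `ν₂`. -/
def IsCoupling (π : Measure (ℝ × ℝ)) (ν₁ ν₂ : Measure ℝ) : Prop :=
  IsProbabilityMeasure π ∧ π.map Prod.fst = ν₁ ∧ π.map Prod.snd = ν₂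

/-- The quadratic Wasserstein distance. -/
noncomputable def Wdist (ν₁ ν₂ : Measure ℝ) : ℝ :=
  Real.sqrt (⨅ π : {π : Measure (ℝ × ℝ) // IsCoupling π ν₁ ν₂},
      ∫⁻ p, ENNReal.ofReal ((p.1 - p.2) ^ 2) ∂(π.1)).toReal

/-- The cumulative distribution function of `ν`. -/
def cdf' (ν : Measure ℝ) (x : ℝ) : ℝ := (ν (Set.Iic x)).toReal

/-- The quantile function of `ν`. -/
noncomputable def quantile (ν : Measure ℝ) (y : ℝ) : ℝ := sInf {x : ℝ | y ≤ cdf' ν x}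

/-- The logarithmic map at `μ`: `log_μ(ν) = F_ν⁻ ∘ F_μ - id`. -/
noncomputable def logMap (μ ν : Measure ℝ) : ℝ → ℝ := fun x => quantile ν (cdf' μ x) - x

/-- The exponential map at `μ`: `exp_μ(v) = (id + v) # μ`. -/
noncomputable def expMap (μ : Measure ℝ) (v : ℝ → ℝ) : Measure ℝ := μ.map fun x => x + v x

/-- `μ` is atomless. -/
def Atomless (μ : Measure ℝ) : Prop := ∀ x : ℝ, μ {x} = 0

open Set Filter Topology ProbabilityTheory
open scoped ENNReal

local notation "𝕌" => Measure.restrict (volume : Measure ℝ) (Ioo (0 : ℝ) 1)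

instance : IsProbabilityMeasure 𝕌 := ⟨by simp [Real.volume_Ioo]⟩

lemma uniform_Iic (y : ℝ) : 𝕌 (Iic y) = ENNReal.ofReal (min y 1) := by
  rw [Measure.restrict_congr_set Ioo_ae_eq_Ioc, Measure.restrict_apply measurableSet_Iic,
    inter_comm, Ioc_inter_Iic, Real.volume_Ioc, sub_zero, min_comm]

lemma FinSecondMoment.memLp_two_id {ν : Measure ℝ} (h : FinSecondMoment ν) : MemLp id 2 ν :=
  (memLp_two_iff_integrable_sq aestronglyMeasurable_id).2
    ⟨by fun_prop, (hasFiniteIntegral_iff_ofReal (ae_of_all _ fun x ↦ sq_nonneg x)).2 h⟩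

lemma cdf'_eq_cdf (μ : Measure ℝ) [IsProbabilityMeasure μ] : cdf' μ = cdf μ := by
  ext x
  rw [cdf_eq_real]
  rfl

section CDF

variable {μ : Measure ℝ} [IsProbabilityMeasure μ]

lemma Atomless.continuous_cdf (hμ : Atomless μ) : Continuous (cdf μ) := by
  refine continuous_iff_continuousAt.2 fun x ↦ ?_
  have hleft : Function.leftLim (cdf μ) x = cdf μ x := by
    have hx := hμ x
    rw [← measure_cdf μ, StieltjesFunction.measure_singleton, ENNReal.ofReal_eq_zero,
      sub_nonpos] at hx
    exact le_antisymm ((cdf μ).mono.leftLim_le le_rfl) hx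
  rw [(cdf μ).mono.continuousAt_iff_leftLim_eq_rightLim, hleft, StieltjesFunction.rightLim_eq]

lemma Atomless.map_cdf (hμ : Atomless μ) : μ.map (cdf μ) = 𝕌 := by
  have hF := hμ.continuous_cdf
  refine Measure.ext_of_Iic _ _ fun y ↦ ?_
  rw [Measure.map_apply hF.measurable measurableSet_Iic, uniform_Iic]
  rcases le_or_gt 1 y with hy1 | hy1
  · rw [min_eq_right hy1, ENNReal.ofReal_one, ← measure_univ (μ := μ)]
    exact congrArg μ (eq_univ_of_forall fun x ↦ (cdf_le_one μ x).trans hy1)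
  set T := cdf μ ⁻¹' Iic y
  rcases T.eq_empty_or_nonempty with hT | ⟨x₀, hx₀⟩
  · have hy0 : y ≤ 0 := ge_of_tendsto (tendsto_cdf_atBot μ)
      (Eventually.of_forall fun x ↦ le_of_lt (not_le.1 fun h ↦ hT.subset h))
    rw [hT, measure_empty, min_eq_left hy1.le, ENNReal.ofReal_of_nonpos hy0]
  obtain ⟨x₁, hx₁⟩ := ((tendsto_cdf_atTop μ).eventually (eventually_gt_nhds hy1)).exists
  have hbdd : BddAbove T := ⟨x₁, fun x hx ↦ le_of_not_gt fun h ↦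
    (hx₁.trans_le ((cdf μ).mono h.le)).not_ge hx⟩
  have hsup : sSup T ∈ T := (isClosed_Iic.preimage hF).csSup_mem ⟨x₀, hx₀⟩ hbdd
  have hTeq : T = Iic (sSup T) := Subset.antisymm (fun x hx ↦ le_csSup hbdd hx)
    fun x hx ↦ ((cdf μ).mono hx).trans hsup
  obtain ⟨c, hc⟩ := intermediate_value_univ x₀ x₁ hF ⟨hx₀, hx₁.le⟩
  have hyF : cdf μ (sSup T) = y :=
    le_antisymm hsup (hc ▸ (cdf μ).mono (le_csSup hbdd (show c ∈ T from hc.le)))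
  rw [hTeq, ← ofReal_cdf, hyF, min_eq_left hy1.le]

end CDF

section Quantile

variable {ν : Measure ℝ} [IsProbabilityMeasure ν]

lemma le_cdf_quantile {y : ℝ} (hy : y ∈ Ioo 0 1) : y ≤ cdf ν (quantile ν y) := by
  have hne : {x | y ≤ cdf ν x}.Nonempty :=
    ((tendsto_cdf_atTop ν).eventually (eventually_gt_nhds hy.2)).exists.imp fun _ ↦ le_of_lt
  refine ge_of_tendsto (((cdf ν).right_continuous _).mono Ioi_subset_Ici_self).tendsto
    (eventually_nhdsWithin_of_forall fun x hx ↦ ?_)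
  rw [quantile, cdf'_eq_cdf] at hx
  obtain ⟨x', hx', hx'x⟩ := exists_lt_of_csInf_lt hne hx
  exact hx'.trans ((cdf ν).mono hx'x.le)

lemma quantile_le_iff {x y : ℝ} (hy : y ∈ Ioo 0 1) : quantile ν y ≤ x ↔ y ≤ cdf ν x := by
  refine ⟨fun h ↦ (le_cdf_quantile hy).trans ((cdf ν).mono h), fun h ↦ csInf_le ?_ ?_⟩
  · obtain ⟨x₀, hx₀⟩ := ((tendsto_cdf_atBot ν).eventually (eventually_lt_nhds hy.1)).exists
    refine ⟨x₀, fun x hx ↦ ?_⟩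
    rw [mem_ofPred_eq, cdf'_eq_cdf] at hx
    exact le_of_not_gt fun hlt ↦ (hx.trans ((cdf ν).mono hlt.le)).not_gt hx₀
  · rwa [mem_ofPred_eq, cdf'_eq_cdf]

lemma monotoneOn_quantile : MonotoneOn (quantile ν) (Ioo 0 1) := fun _ ha _ hb hab ↦
  (quantile_le_iff ha).2 (hab.trans (le_cdf_quantile hb))

-- `quantile ν` takes junk values off `(0,1)`, so it is only `𝕌`-a.e. measurable.
lemma aemeasurable_quantile : AEMeasurable (quantile ν) 𝕌 :=
  aemeasurable_restrict_of_monotoneOn measurableSet_Ioo monotoneOn_quantile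

lemma map_quantile : (𝕌).map (quantile ν) = ν := by
  refine Measure.ext_of_Iic _ _ fun x ↦ ?_
  have hpre : quantile ν ⁻¹' Iic x ∩ Ioo 0 1 = Iic (cdf ν x) ∩ Ioo 0 1 := by
    ext y
    simp only [mem_inter_iff, mem_preimage, mem_Iic]
    exact and_congr_left quantile_le_iff
  rw [Measure.map_apply_of_aemeasurable aemeasurable_quantile measurableSet_Iic,
    Measure.restrict_apply' measurableSet_Ioo, hpre, ← Measure.restrict_apply' measurableSet_Ioo,
    uniform_Iic, min_eq_left (cdf_le_one ν x), ofReal_cdf]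

lemma FinSecondMoment.memLp_quantile (h : FinSecondMoment ν) : MemLp (quantile ν) 2 𝕌 := by
  have := h.memLp_two_id
  rwa [← map_quantile (ν := ν), memLp_map_measure_iff aestronglyMeasurable_id
    aemeasurable_quantile] at this

end Quantile

lemma MonotoneOn.inter_preimage_Iic_total {α β : Type*} [LinearOrder α] [Preorder β]
    {s : Set α} {g₁ g₂ : α → β} (hg₁ : MonotoneOn g₁ s) (hg₂ : MonotoneOn g₂ s) (a b : β) :
    g₁ ⁻¹' Iic a ∩ s ⊆ g₂ ⁻¹' Iic b ∩ s ∨ g₂ ⁻¹' Iic b ∩ s ⊆ g₁ ⁻¹' Iic a ∩ s := by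
  rw [or_iff_not_imp_left, not_subset]
  rintro ⟨d, ⟨hd₁, hds⟩, hd₂⟩ e ⟨he₂, hes⟩
  refine ⟨?_, hes⟩
  rcases le_total d e with hde | hed
  · exact absurd ⟨(hg₂ hds hes hde).trans he₂, hds⟩ hd₂
  · exact (hg₁ hes hds hed).trans hd₁

/-- `p ∈ straddle q` iff both coordinates of `q` lie in `[min p, max p)`, so that `(p.1 - p.2) ^ 2`
is the area of `{q | p ∈ straddle q}`. -/
def straddle (q : ℝ × ℝ) : Set (ℝ × ℝ) :=
  {p | p.1 ⊓ p.2 ≤ q.1 ⊓ q.2 ∧ q.1 ⊔ q.2 < p.1 ⊔ p.2}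

lemma straddle_eq (q : ℝ × ℝ) :
    straddle q = (Prod.fst ⁻¹' Iic (q.1 ⊓ q.2) \ Prod.snd ⁻¹' Iic (q.1 ⊔ q.2)) ∪
      (Prod.snd ⁻¹' Iic (q.1 ⊓ q.2) \ Prod.fst ⁻¹' Iic (q.1 ⊔ q.2)) := by
  have hab : q.1 ⊓ q.2 ≤ q.1 ⊔ q.2 := inf_le_sup
  ext p
  simp only [straddle, mem_ofPred_eq, mem_union, Set.mem_sdiff, mem_preimage, mem_Iic, inf_le_iff,
    lt_sup_iff, not_le]
  constructor
  · rintro ⟨h₁ | h₁, h₂ | h₂⟩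
    · exact absurd h₂ (h₁.trans hab).not_gt
    · exact Or.inl ⟨h₁, h₂⟩
    · exact Or.inr ⟨h₁, h₂⟩
    · exact absurd h₂ (h₁.trans hab).not_gt
  · rintro (⟨h₁, h₂⟩ | ⟨h₁, h₂⟩)
    · exact ⟨Or.inl h₁, Or.inr h₂⟩
    · exact ⟨Or.inr h₁, Or.inl h₂⟩

lemma volume_setOf_mem_straddle (p : ℝ × ℝ) :
    volume {q : ℝ × ℝ | p ∈ straddle q} = ENNReal.ofReal ((p.1 - p.2) ^ 2) := by
  have hset : {q : ℝ × ℝ | p ∈ straddle q} =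
      Ico (p.1 ⊓ p.2) (p.1 ⊔ p.2) ×ˢ Ico (p.1 ⊓ p.2) (p.1 ⊔ p.2) := by
    ext q
    simp only [straddle, mem_ofPred_eq, mem_prod, mem_Ico, le_inf_iff, sup_lt_iff]
    tauto
  rw [hset, Measure.volume_eq_prod, Measure.prod_prod, Real.volume_Ico, max_sub_min_eq_abs,
    abs_sub_comm, ← ENNReal.ofReal_mul (abs_nonneg _), abs_mul_abs_self, sq]

lemma lintegral_sq_sub_eq_lintegral_straddle (π : Measure (ℝ × ℝ)) [SFinite π] :
    ∫⁻ p, ENNReal.ofReal ((p.1 - p.2) ^ 2) ∂π = ∫⁻ q, π (straddle q) := by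
  set S : Set ((ℝ × ℝ) × (ℝ × ℝ)) := {r | r.1 ∈ straddle r.2}
  have hS : MeasurableSet S :=
    show MeasurableSet ({r : (ℝ × ℝ) × (ℝ × ℝ) | r.1.1 ⊓ r.1.2 ≤ r.2.1 ⊓ r.2.2} ∩
      {r | r.2.1 ⊔ r.2.2 < r.1.1 ⊔ r.1.2}) from
    (measurableSet_le (by fun_prop) (by fun_prop)).inter
      (measurableSet_lt (by fun_prop) (by fun_prop))
  calc ∫⁻ p, ENNReal.ofReal ((p.1 - p.2) ^ 2) ∂π = ∫⁻ p, volume (Prod.mk p ⁻¹' S) ∂π := by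
        simp_rw [← volume_setOf_mem_straddle]; rfl
    _ = ∫⁻ q, π ((fun p ↦ (p, q)) ⁻¹' S) := by
        rw [← Measure.prod_apply hS, Measure.prod_apply_symm hS]
    _ = ∫⁻ q, π (straddle q) := rfl

lemma disjoint_straddle_parts (q : ℝ × ℝ) :
    Disjoint (Prod.fst ⁻¹' Iic (q.1 ⊓ q.2) \ Prod.snd ⁻¹' Iic (q.1 ⊔ q.2))
      (Prod.snd ⁻¹' Iic (q.1 ⊓ q.2) \ Prod.fst ⁻¹' Iic (q.1 ⊔ q.2)) :=
  disjoint_left.2 fun _ h₁ h₂ ↦ h₂.2 (le_trans (b := q.1 ⊓ q.2) h₁.1 inf_le_sup)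

lemma IsCoupling.le_measure_straddle {π : Measure (ℝ × ℝ)} {ν₁ ν₂ : Measure ℝ}
    (hπ : IsCoupling π ν₁ ν₂) (q : ℝ × ℝ) :
    (ν₁ (Iic (q.1 ⊓ q.2)) - ν₂ (Iic (q.1 ⊔ q.2))) +
      (ν₂ (Iic (q.1 ⊓ q.2)) - ν₁ (Iic (q.1 ⊔ q.2))) ≤ π (straddle q) := by
  obtain ⟨-, rfl, rfl⟩ := hπ
  rw [straddle_eq, measure_union (disjoint_straddle_parts q)
    ((measurable_snd measurableSet_Iic).diff (measurable_fst measurableSet_Iic))]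
  simp only [Measure.map_apply measurable_fst measurableSet_Iic,
    Measure.map_apply measurable_snd measurableSet_Iic]
  exact add_le_add le_measure_sdiff le_measure_sdiff

lemma dist_toLp_eq_sqrt_lintegral {α : Type*} [MeasurableSpace α] {μ : Measure α} {f g : α → ℝ}
    (hf : MemLp f 2 μ) (hg : MemLp g 2 μ) :
    dist (hf.toLp f) (hg.toLp g) = √(∫⁻ x, ENNReal.ofReal ((f x - g x) ^ 2) ∂μ).toReal := by
  have hsq : ∀ x, ‖(f - g) x‖ₑ ^ (2 : ℝ) = ENNReal.ofReal ((f x - g x) ^ 2) := fun x ↦ by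
    rw [Real.enorm_eq_ofReal_abs, ENNReal.ofReal_rpow_of_nonneg (abs_nonneg _) zero_le_two]
    simp
  rw [dist_eq_norm, ← MemLp.toLp_sub, Lp.norm_toLp,
    eLpNorm_eq_lintegral_rpow_enorm_toReal two_ne_zero ENNReal.ofNat_ne_top]
  simp only [ENNReal.toReal_ofNat, hsq, ENNReal.toReal_rpow, Real.sqrt_eq_rpow, one_div]

section MonotoneCoupling

variable {μ : Measure ℝ} {s : Set ℝ} {g₁ g₂ : ℝ → ℝ}

lemma restrict_preimage_Iic_sdiff (hs : MeasurableSet s) [IsFiniteMeasure (μ.restrict s)]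
    (hg₁ : MonotoneOn g₁ s) (hg₂ : MonotoneOn g₂ s) (hm₂ : AEMeasurable g₂ (μ.restrict s))
    (a b : ℝ) :
    μ.restrict s (g₁ ⁻¹' Iic a \ g₂ ⁻¹' Iic b) =
      μ.restrict s (g₁ ⁻¹' Iic a) - μ.restrict s (g₂ ⁻¹' Iic b) := by
  simp only [Measure.restrict_apply' hs]
  rw [inter_sdiff_distrib_right]
  rcases hg₁.inter_preimage_Iic_total hg₂ a b with h | h
  · rw [sdiff_eq_empty.2 h, measure_empty, eq_comm, tsub_eq_zero_iff_le]
    exact measure_mono h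
  · refine measure_sdiff h ((nullMeasurableSet_restrict hs.nullMeasurableSet).1
      (hm₂.nullMeasurable measurableSet_Iic)) ?_
    rw [← Measure.restrict_apply' hs]
    exact measure_ne_top _ _

lemma map_prod_straddle (hs : MeasurableSet s) [IsFiniteMeasure (μ.restrict s)]
    (hg₁ : MonotoneOn g₁ s) (hg₂ : MonotoneOn g₂ s) (hm₁ : AEMeasurable g₁ (μ.restrict s))
    (hm₂ : AEMeasurable g₂ (μ.restrict s)) (q : ℝ × ℝ) :
    (μ.restrict s).map (fun y ↦ (g₁ y, g₂ y)) (straddle q) =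
      ((μ.restrict s).map g₁ (Iic (q.1 ⊓ q.2)) - (μ.restrict s).map g₂ (Iic (q.1 ⊔ q.2))) +
        ((μ.restrict s).map g₂ (Iic (q.1 ⊓ q.2)) - (μ.restrict s).map g₁ (Iic (q.1 ⊔ q.2))) := by
  have hm := hm₁.prodMk hm₂
  have hpart : ∀ {i j : ℝ × ℝ → ℝ}, Measurable i → Measurable j → ∀ a b : ℝ,
      MeasurableSet (i ⁻¹' Iic a \ j ⁻¹' Iic b) :=
    fun hi hj a b ↦ (hi measurableSet_Iic).diff (hj measurableSet_Iic)
  rw [straddle_eq,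
    measure_union (disjoint_straddle_parts q) (hpart measurable_snd measurable_fst _ _),
    Measure.map_apply_of_aemeasurable hm (hpart measurable_fst measurable_snd _ _),
    Measure.map_apply_of_aemeasurable hm (hpart measurable_snd measurable_fst _ _),
    Measure.map_apply_of_aemeasurable hm₁ measurableSet_Iic,
    Measure.map_apply_of_aemeasurable hm₁ measurableSet_Iic,
    Measure.map_apply_of_aemeasurable hm₂ measurableSet_Iic,
    Measure.map_apply_of_aemeasurable hm₂ measurableSet_Iic]
  exact congrArg₂ (· + ·) (restrict_preimage_Iic_sdiff hs hg₁ hg₂ hm₂ _ _)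
    (restrict_preimage_Iic_sdiff hs hg₂ hg₁ hm₁ _ _)

theorem iInf_cost_eq_of_monotoneOn {ν₁ ν₂ : Measure ℝ} (hs : MeasurableSet s)
    [IsProbabilityMeasure (μ.restrict s)] (hg₁ : MonotoneOn g₁ s) (hg₂ : MonotoneOn g₂ s)
    (hm₁ : AEMeasurable g₁ (μ.restrict s)) (hm₂ : AEMeasurable g₂ (μ.restrict s))
    (hν₁ : (μ.restrict s).map g₁ = ν₁) (hν₂ : (μ.restrict s).map g₂ = ν₂) :
    ⨅ π : {π : Measure (ℝ × ℝ) // IsCoupling π ν₁ ν₂},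
        ∫⁻ p, ENNReal.ofReal ((p.1 - p.2) ^ 2) ∂π.1 =
      ∫⁻ y, ENNReal.ofReal ((g₁ y - g₂ y) ^ 2) ∂μ.restrict s := by
  have hm := hm₁.prodMk hm₂
  set π₀ := (μ.restrict s).map (fun y ↦ (g₁ y, g₂ y))
  have hπ₀ : IsCoupling π₀ ν₁ ν₂ := by
    refine ⟨Measure.isProbabilityMeasure_map hm, ?_, ?_⟩
    · rw [AEMeasurable.map_map_of_aemeasurable measurable_fst.aemeasurable hm, ← hν₁]; rfl
    · rw [AEMeasurable.map_map_of_aemeasurable measurable_snd.aemeasurable hm, ← hν₂]; rfl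
  have hcost : ∫⁻ p, ENNReal.ofReal ((p.1 - p.2) ^ 2) ∂π₀ =
      ∫⁻ y, ENNReal.ofReal ((g₁ y - g₂ y) ^ 2) ∂μ.restrict s :=
    lintegral_map' (by fun_prop) hm
  refine le_antisymm ((iInf_le _ ⟨π₀, hπ₀⟩).trans_eq hcost) (le_iInf fun π ↦ ?_)
  have := π.2.1
  rw [← hcost, lintegral_sq_sub_eq_lintegral_straddle, lintegral_sq_sub_eq_lintegral_straddle]
  refine lintegral_mono fun q ↦ ?_
  rw [map_prod_straddle hs hg₁ hg₂ hm₁ hm₂, hν₁, hν₂]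
  exact π.2.le_measure_straddle q

lemma Wdist_eq_dist_toLp {ν₁ ν₂ : Measure ℝ} (hs : MeasurableSet s)
    [IsProbabilityMeasure (μ.restrict s)] (hg₁ : MonotoneOn g₁ s) (hg₂ : MonotoneOn g₂ s)
    (hL₁ : MemLp g₁ 2 (μ.restrict s)) (hL₂ : MemLp g₂ 2 (μ.restrict s))
    (hν₁ : (μ.restrict s).map g₁ = ν₁) (hν₂ : (μ.restrict s).map g₂ = ν₂) :
    Wdist ν₁ ν₂ = dist (hL₁.toLp g₁) (hL₂.toLp g₂) := by
  rw [dist_toLp_eq_sqrt_lintegral, Wdist, iInf_cost_eq_of_monotoneOn hs hg₁ hg₂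
    hL₁.aestronglyMeasurable.aemeasurable hL₂.aestronglyMeasurable.aemeasurable hν₁ hν₂]

end MonotoneCoupling

def interpQuantile (ν₀ ν₁ : Measure ℝ) (t y : ℝ) : ℝ := (1 - t) * quantile ν₀ y + t * quantile ν₁ y

section Interpolation

variable {ν₀ ν₁ : Measure ℝ} [IsProbabilityMeasure ν₀] [IsProbabilityMeasure ν₁]

lemma monotoneOn_interpQuantile {t : ℝ} (ht : t ∈ Icc 0 1) :
    MonotoneOn (interpQuantile ν₀ ν₁ t) (Ioo 0 1) := fun _ ha _ hb hab ↦
  add_le_add (mul_le_mul_of_nonneg_left (monotoneOn_quantile ha hb hab) (sub_nonneg.2 ht.2))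
    (mul_le_mul_of_nonneg_left (monotoneOn_quantile ha hb hab) ht.1)

lemma aemeasurable_interpQuantile (t : ℝ) : AEMeasurable (interpQuantile ν₀ ν₁ t) 𝕌 :=
  (aemeasurable_quantile.const_mul _).add (aemeasurable_quantile.const_mul _)

lemma expMap_segment_eq_map {μ : Measure ℝ} [IsProbabilityMeasure μ] (hμ : Atomless μ) (t : ℝ) :
    expMap μ (fun x ↦ (1 - t) * logMap μ ν₀ x + t * logMap μ ν₁ x) =
      (𝕌).map (interpQuantile ν₀ ν₁ t) := by
  have hcomp : (fun x ↦ x + ((1 - t) * logMap μ ν₀ x + t * logMap μ ν₁ x)) =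
      interpQuantile ν₀ ν₁ t ∘ cdf μ := by
    ext x
    simp only [logMap, interpQuantile, Function.comp_apply, cdf'_eq_cdf]
    ring
  rw [expMap, hcomp, ← AEMeasurable.map_map_of_aemeasurable
    (hμ.map_cdf ▸ aemeasurable_interpQuantile t) hμ.continuous_cdf.measurable.aemeasurable,
    hμ.map_cdf]

end Interpolation

namespace MemW2

variable {ν ν₀ ν₁ : Measure ℝ}

lemma memLp_quantile (h : MemW2 ν) : MemLp (quantile ν) 2 𝕌 :=
  have := h.1
  h.2.memLp_quantile

def quantileLp (h : MemW2 ν) : Lp ℝ 2 𝕌 := h.memLp_quantile.toLp _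

lemma Wdist_eq_dist (h₁ : MemW2 ν₁) (h₂ : MemW2 ν₂) :
    Wdist ν₁ ν₂ = dist h₁.quantileLp h₂.quantileLp :=
  have := h₁.1
  have := h₂.1
  Wdist_eq_dist_toLp measurableSet_Ioo monotoneOn_quantile monotoneOn_quantile _ _
    map_quantile map_quantile

lemma memLp_interpQuantile (h₀ : MemW2 ν₀) (h₁ : MemW2 ν₁) (t : ℝ) :
    MemLp (interpQuantile ν₀ ν₁ t) 2 𝕌 :=
  (h₀.memLp_quantile.const_mul _).add (h₁.memLp_quantile.const_mul _)

lemma toLp_interpQuantile (h₀ : MemW2 ν₀) (h₁ : MemW2 ν₁) (t : ℝ) :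
    (h₀.memLp_interpQuantile h₁ t).toLp _ = AffineMap.lineMap h₀.quantileLp h₁.quantileLp t := by
  rw [AffineMap.lineMap_apply_module, quantileLp, quantileLp, ← MemLp.toLp_const_smul,
    ← MemLp.toLp_const_smul, ← MemLp.toLp_add]
  rfl

lemma Wdist_map_interpQuantile (h₀ : MemW2 ν₀) (h₁ : MemW2 ν₁) {r s : ℝ} (hr : r ∈ Icc 0 1)
    (hs : s ∈ Icc 0 1) :
    Wdist ((𝕌).map (interpQuantile ν₀ ν₁ r)) ((𝕌).map (interpQuantile ν₀ ν₁ s)) =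
      |r - s| * Wdist ν₀ ν₁ := by
  have := h₀.1
  have := h₁.1
  rw [Wdist_eq_dist_toLp measurableSet_Ioo (monotoneOn_interpQuantile hr)
    (monotoneOn_interpQuantile hs) (h₀.memLp_interpQuantile h₁ r)
    (h₀.memLp_interpQuantile h₁ s) rfl rfl, h₀.toLp_interpQuantile h₁, h₀.toLp_interpQuantile h₁,
    dist_lineMap_lineMap, Real.dist_eq, h₀.Wdist_eq_dist h₁]

lemma eq_map_interpQuantile_of_Wdist (h₀ : MemW2 ν₀) (h₁ : MemW2 ν₁) (h : MemW2 ν) {t : ℝ}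
    (hd₀ : Wdist ν₀ ν = t * Wdist ν₀ ν₁) (hd₁ : Wdist ν ν₁ = (1 - t) * Wdist ν₀ ν₁) :
    ν = (𝕌).map (interpQuantile ν₀ ν₁ t) := by
  have := h.1
  rw [h₀.Wdist_eq_dist h, h₀.Wdist_eq_dist h₁] at hd₀
  rw [h.Wdist_eq_dist h₁, h₀.Wdist_eq_dist h₁] at hd₁
  have hQ := eq_lineMap_of_dist_eq_mul_of_dist_eq_mul hd₀ hd₁
  rw [← toLp_interpQuantile h₀ h₁, quantileLp, MemLp.toLp_eq_toLp_iff] at hQ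
  rw [← Measure.map_congr hQ, map_quantile]

end MemW2

theorem geodesic_iff_exp_of_segment_general (μ : Measure ℝ) (hμp : IsProbabilityMeasure μ)
    (hμa : Atomless μ)
    (γ : ℝ → Measure ℝ) (hγ : ∀ t ∈ Set.Icc (0 : ℝ) 1, MemW2 (γ t)) :
    (∀ s ∈ Set.Icc (0 : ℝ) 1, ∀ t ∈ Set.Icc (0 : ℝ) 1,
        Wdist (γ s) (γ t) = |s - t| * Wdist (γ 0) (γ 1)) ↔
      ∀ t ∈ Set.Icc (0 : ℝ) 1,
        γ t = expMap μ (fun x => (1 - t) * logMap μ (γ 0) x + t * logMap μ (γ 1) x) := by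
  have h₀ := hγ 0 (left_mem_Icc.2 zero_le_one)
  have h₁ := hγ 1 (right_mem_Icc.2 zero_le_one)
  have := h₀.1
  have := h₁.1
  simp only [expMap_segment_eq_map hμa]
  constructor
  · intro hgeo t ht
    refine h₀.eq_map_interpQuantile_of_Wdist h₁ (hγ t ht) ?_ ?_
    · simpa [abs_of_nonneg ht.1] using hgeo 0 (left_mem_Icc.2 zero_le_one) t ht
    · simpa [abs_of_nonpos (sub_nonpos.2 ht.2)] using hgeo t ht 1 (right_mem_Icc.2 zero_le_one)
  · intro hexp s hs t ht
    rw [hexp s hs, hexp t ht]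
    exact h₀.Wdist_map_interpQuantile h₁ hs ht

/-- A curve `γ : [0,1] → W₂(ℝ)` is a constant-speed geodesic if and only if
`γ t = exp_μ((1 − t) v₀ + t v₁)` where `v₀ = log_μ(γ 0)`, `v₁ = log_μ(γ 1)`. -/
theorem geodesic_iff_exp_of_segment (μ : Measure ℝ) (hμp : IsProbabilityMeasure μ)
    (hμa : Atomless μ) (hμ2 : FinSecondMoment μ)
    (γ : ℝ → Measure ℝ) (hγ : ∀ t ∈ Set.Icc (0 : ℝ) 1, MemW2 (γ t)) :
    (∀ s ∈ Set.Icc (0 : ℝ) 1, ∀ t ∈ Set.Icc (0 : ℝ) 1,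
        Wdist (γ s) (γ t) = |s - t| * Wdist (γ 0) (γ 1)) ↔
      ∀ t ∈ Set.Icc (0 : ℝ) 1,
        γ t = expMap μ (fun x => (1 - t) * logMap μ (γ 0) x + t * logMap μ (γ 1) x) :=
  geodesic_iff_exp_of_segment_general μ hμp hμa γ hγ
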